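/- Under the hypotheses of the RLC iteration with noiseless gradients and constant step size 0 < α ≤ min{1/(β+λ), 1/γ}, the averaged iterate x̄^K = (1/K) Σ_{k=1}^K x^{k+1} satisfies the O(1/K) duality-gap bound ℓ(x̄^K, u*) − ℓ(x*, u*) ≤ V(x^1, u^1)/(αK). -/

import Mathlib

open scoped RealInnerProductSpace
open Finset

noncomputable section RLCsetup

/-- Node variables: one `ℝⁿ` vector per node, with the Euclidean (ℓ₂) product
structure. -/
abbrev NodeVec (V n : ℕ) := PiLp 2 fun _ : Fin V => EuclideanSpace ℝ (Fin n)

/-- Edge variables: one `ℝⁿ` vector per edge. -/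
abbrev EdgeVec (m n : ℕ) := PiLp 2 fun _ : Fin m => EuclideanSpace ℝ (Fin n)

/-- Entries of the signed incidence matrix of the oriented graph. -/
def inc {V m : ℕ} (head tail : Fin m → Fin V) (i : Fin V) (e : Fin m) : ℝ :=
  if i = head e then 1 else if i = tail e then -1 else 0

/-- `E_l u = (E diag(√l) ⊗ Iₙ) u`. -/
def Elmap {V m n : ℕ} (head tail : Fin m → Fin V) (l : Fin m → ℝ)
    (u : EdgeVec m n) : NodeVec V n :=
  WithLp.toLp 2 <| fun i => ∑ e, (inc head tail i e * Real.sqrt (l e)) • u e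

/-- `E_lᵀ x = (diag(√l) Eᵀ ⊗ Iₙ) x`. -/
def EltMap {V m n : ℕ} (head tail : Fin m → Fin V) (l : Fin m → ℝ)
    (x : NodeVec V n) : EdgeVec m n :=
  WithLp.toLp 2 <| fun e => Real.sqrt (l e) • ∑ i, inc head tail i e • x i

/-- `L_r x = (E diag(r) Eᵀ ⊗ Iₙ) x`. -/
def LrMap {V m n : ℕ} (head tail : Fin m → Fin V) (r : Fin m → ℝ)
    (x : NodeVec V n) : NodeVec V n :=
  WithLp.toLp 2 <| fun i => ∑ e, (inc head tail i e * r e) • ∑ j, inc head tail j e • x j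

/-- Bregman divergence on node variables. -/
def bregman {V n : ℕ} (ψ : NodeVec V n → ℝ) (ψ' : NodeVec V n → NodeVec V n)
    (x' x : NodeVec V n) : ℝ :=
  ψ x' - ψ x - ⟪ψ' x, x' - x⟫

end RLCsetup

/-!
Each RLC iteration is a mirror-descent step in `x` followed by a dual ascent step in `u`.
The three-point identity of the Bregman divergence, convexity and `β`-smoothness of `f`, and the
expansion of `‖u^{k+1} - u*‖²` give
`α (ℓ(x^{k+1}, u*) - ℓ(x*, u*)) ≤ V(x^k, u^k) - V(x^{k+1}, u^{k+1})`
up to the error `-B_ψ(x^{k+1}, x^k) + α(β + λ)/2 ‖x^{k+1} - x^k‖²`: the cross terms in `L_r`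
are absorbed using `α‖E_lᵀ x‖² ≤ ⟪L_r x, x⟫` (from `α ≤ 1/γ`) and the Rayleigh bound
`⟪L_r y, y⟫ ≤ λ‖y‖²`, and the error is nonpositive because `ψ` is `1`-strongly convex and
`α ≤ 1/(β + λ)`. Summing over `k` telescopes, and Jensen's inequality for the convex function
`ℓ(·, u*)` passes to the averaged iterate.
-/

section Gradient

variable {E : Type*} [NormedAddCommGroup E] [InnerProductSpace ℝ E] [CompleteSpace E]
  {f g : E → ℝ} {f' g' x z : E} {s : Set E}

theorem HasGradientAt.add (hf : HasGradientAt f f' x) (hg : HasGradientAt g g' x) :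
    HasGradientAt (fun y => f y + g y) (f' + g') x := by
  rw [hasGradientAt_iff_hasFDerivAt, map_add]
  exact (hasGradientAt_iff_hasFDerivAt.mp hf).add (hasGradientAt_iff_hasFDerivAt.mp hg)

theorem HasGradientAt.sub (hf : HasGradientAt f f' x) (hg : HasGradientAt g g' x) :
    HasGradientAt (fun y => f y - g y) (f' - g') x := by
  rw [hasGradientAt_iff_hasFDerivAt, map_sub]
  exact (hasGradientAt_iff_hasFDerivAt.mp hf).sub (hasGradientAt_iff_hasFDerivAt.mp hg)

theorem HasGradientAt.neg (hf : HasGradientAt f f' x) :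
    HasGradientAt (fun y => -f y) (-f') x := by
  rw [hasGradientAt_iff_hasFDerivAt, map_neg]
  exact (hasGradientAt_iff_hasFDerivAt.mp hf).neg

theorem HasGradientAt.const_mul (c : ℝ) (hf : HasGradientAt f f' x) :
    HasGradientAt (fun y => c * f y) (c • f') x := by
  rw [hasGradientAt_iff_hasFDerivAt, map_smul]
  exact (hasGradientAt_iff_hasFDerivAt.mp hf).const_mul c

theorem hasGradientAt_inner_left (w x : E) : HasGradientAt (fun y => ⟪w, y⟫) w x :=
  hasGradientAt_iff_hasFDerivAt.mpr (InnerProductSpace.toDual ℝ E w).hasFDerivAt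

theorem hasGradientAt_mul_norm_sq (c : ℝ) (x : E) :
    HasGradientAt (fun y => c / 2 * ‖y‖ ^ 2) (c • x) x := by
  have h : HasGradientAt (fun y : E => ‖y‖ ^ 2) ((2 : ℝ) • x) x := by
    rw [hasGradientAt_iff_hasFDerivAt]
    refine (hasStrictFDerivAt_norm_sq x).hasFDerivAt.congr_fderiv ?_
    ext y
    simp
  convert h.const_mul (c / 2) using 1
  rw [smul_smul, div_mul_cancel₀ c two_ne_zero]

theorem ConvexOn.add_inner_gradient_le (hf : ConvexOn ℝ s f) (hx : x ∈ s) (hz : z ∈ s)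
    (hgrad : HasGradientAt f f' x) : f x + ⟪f', z - x⟫ ≤ f z := by
  have hline : ConvexOn ℝ (Set.Icc (0 : ℝ) 1) (f ∘ AffineMap.lineMap x z) :=
    (hf.comp_affineMap _).subset (fun t ht => hf.1.lineMap_mem hx hz ht) (convex_Icc (0 : ℝ) 1)
  have hderiv : HasDerivAt (f ∘ AffineMap.lineMap x z) ⟪f', z - x⟫ (0 : ℝ) := by
    have hf' : HasFDerivAt f (InnerProductSpace.toDual ℝ E f') (AffineMap.lineMap x z (0 : ℝ)) :=
      by simpa using hasGradientAt_iff_hasFDerivAt.mp hgrad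
    have := hf'.comp_hasDerivAt (0 : ℝ) AffineMap.hasDerivAt_lineMap
    simpa using this
  have := hline.le_slope_of_hasDerivAt (by simp) (by simp) zero_lt_one hderiv
  simp only [slope_def_field, Function.comp_apply, AffineMap.lineMap_apply_one,
    AffineMap.lineMap_apply_zero, sub_zero, div_one] at this
  linarith

theorem IsMinOn.inner_gradient_nonneg (hs : Convex ℝ s) (hmin : IsMinOn f s x) (hx : x ∈ s)
    (hz : z ∈ s) (hgrad : HasGradientAt f f' x) : 0 ≤ ⟪f', z - x⟫ :=
  hmin.localize.hasFDerivWithinAt_nonneg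
    (hasGradientAt_iff_hasFDerivAt.mp hgrad).hasFDerivWithinAt
    (sub_mem_posTangentConeAt_of_segment_subset (hs.segment_subset hx hz))

theorem add_inner_gradient_add_mul_norm_sq_le {c : ℝ}
    (hf : ConvexOn ℝ s (fun y => f y - c / 2 * ‖y‖ ^ 2)) (hx : x ∈ s) (hz : z ∈ s)
    (hgrad : HasGradientAt f f' x) : f x + ⟪f', z - x⟫ + c / 2 * ‖z - x‖ ^ 2 ≤ f z := by
  have := hf.add_inner_gradient_le hx hz (hgrad.sub (hasGradientAt_mul_norm_sq c x))
  rw [norm_sub_sq_real, real_inner_comm x z]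
  simp only [inner_sub_left, inner_sub_right, real_inner_smul_left, real_inner_self_eq_norm_sq]
    at this ⊢
  linarith

theorem le_add_inner_gradient_add_mul_norm_sq {c : ℝ}
    (hf : ConvexOn ℝ s (fun y => c / 2 * ‖y‖ ^ 2 - f y)) (hx : x ∈ s) (hz : z ∈ s)
    (hgrad : HasGradientAt f f' x) : f z ≤ f x + ⟪f', z - x⟫ + c / 2 * ‖z - x‖ ^ 2 := by
  have hneg : ConvexOn ℝ s (fun y => -f y - -c / 2 * ‖y‖ ^ 2) :=
    hf.congr fun y _ => by ring
  have := add_inner_gradient_add_mul_norm_sq_le hneg hx hz hgrad.neg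
  rw [inner_neg_left] at this
  linarith

end Gradient

section Operator

variable {E : Type*} [NormedAddCommGroup E] [InnerProductSpace ℝ E] {T : E →ₗ[ℝ] E}

theorem LinearMap.IsPositive.inner_sub_two_inner_le (hT : T.IsPositive) (x y : E) :
    ⟪T y, y⟫ - 2 * ⟪T x, y⟫ ≤ ⟪T (y - x), y - x⟫ := by
  have hx := hT.inner_nonneg_left x
  have hsymm : ⟪T y, x⟫ = ⟪T x, y⟫ := by rw [real_inner_comm, hT.isSymmetric]
  rw [map_sub, inner_sub_left, inner_sub_right, inner_sub_right, hsymm]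
  linarith

theorem LinearMap.IsSymmetric.inner_le_mul_norm_sq [FiniteDimensional ℝ E] (hT : T.IsSymmetric)
    {lam : ℝ} (hlam : ∀ μ, Module.End.HasEigenvalue T μ → μ ≤ lam) (v : E) :
    ⟪T v, v⟫ ≤ lam * ‖v‖ ^ 2 := by
  rcases eq_or_ne v 0 with rfl | hv
  · simp
  have : Nontrivial E := ⟨⟨v, 0, hv⟩⟩
  have hbdd : BddAbove (Set.range fun x : {x : E // x ≠ 0} => ⟪T x, x⟫ / ‖(x : E)‖ ^ 2) :=
    ⟨‖LinearMap.toContinuousLinearMap T‖, by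
      rintro _ ⟨x, rfl⟩
      exact (le_abs_self _).trans
        ((LinearMap.toContinuousLinearMap T).rayleighQuotient_le_norm x)⟩
  have hquot := (le_ciSup hbdd ⟨v, hv⟩).trans (hlam _ hT.hasEigenvalue_iSup_of_finiteDimensional)
  rwa [div_le_iff₀ (by positivity)] at hquot

end Operator

section SeparableSum

variable {ι : Type*} [Fintype ι] {F : ι → Type*} [∀ i, SeminormedAddCommGroup (F i)]
  [∀ i, NormedSpace ℝ (F i)] {s : ∀ i, Set (F i)} {φ : ∀ i, F i → ℝ}

theorem convexOn_sum_apply {p : ENNReal} (hφ : ∀ i, ConvexOn ℝ (s i) (φ i)) :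
    ConvexOn ℝ {x : PiLp p F | ∀ i, x i ∈ s i} (fun x => ∑ i, φ i (x i)) := by
  refine ⟨fun a ha b hb μ ν hμ hν hμν i => ?_, fun a ha b hb μ ν hμ hν hμν => ?_⟩
  · simpa using (hφ i).1 (ha i) (hb i) hμ hν hμν
  · simp only [PiLp.add_apply, PiLp.smul_apply, smul_eq_mul, mul_sum, ← sum_add_distrib]
    exact sum_le_sum fun i _ => (hφ i).2 (ha i) (hb i) hμ hν hμν

theorem convexOn_sum_apply_sub_mul_norm_sq {c : ℝ}
    (hφ : ∀ i, ConvexOn ℝ (s i) (fun v => φ i v - c / 2 * ‖v‖ ^ 2)) :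
    ConvexOn ℝ {x : PiLp 2 F | ∀ i, x i ∈ s i} (fun x => ∑ i, φ i (x i) - c / 2 * ‖x‖ ^ 2) :=
  (convexOn_sum_apply hφ).congr fun x _ => by
    dsimp only
    rw [sum_sub_distrib, PiLp.norm_sq_eq_of_L2, mul_sum]

theorem convexOn_mul_norm_sq_sub_sum_apply {c : ℝ}
    (hφ : ∀ i, ConvexOn ℝ (s i) (fun v => c / 2 * ‖v‖ ^ 2 - φ i v)) :
    ConvexOn ℝ {x : PiLp 2 F | ∀ i, x i ∈ s i} (fun x => c / 2 * ‖x‖ ^ 2 - ∑ i, φ i (x i)) :=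
  (convexOn_sum_apply hφ).congr fun x _ => by
    dsimp only
    rw [sum_sub_distrib, PiLp.norm_sq_eq_of_L2, mul_sum]

end SeparableSum

theorem ConvexOn.map_average_sub_le_of_telescoping {E : Type*} [AddCommGroup E] [Module ℝ E]
    {s : Set E} {φ : E → ℝ} (hφ : ConvexOn ℝ s φ) {K : ℕ} (hK : 0 < K) {y : ℕ → E}
    (hy : ∀ k ∈ Icc 1 K, y k ∈ s) {α c : ℝ} (hα : 0 < α) {Φ : ℕ → ℝ} (hΦ : 0 ≤ Φ (K + 1))
    (hstep : ∀ k ∈ Icc 1 K, α * (φ (y k) - c) ≤ Φ k - Φ (k + 1)) :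
    φ ((K : ℝ)⁻¹ • ∑ k ∈ Icc 1 K, y k) - c ≤ Φ 1 / (α * K) := by
  have hKpos : (0 : ℝ) < K := by exact_mod_cast hK
  have hjensen : φ ((K : ℝ)⁻¹ • ∑ k ∈ Icc 1 K, y k) ≤ (K : ℝ)⁻¹ * ∑ k ∈ Icc 1 K, φ (y k) := by
    have := hφ.map_sum_le (t := Icc 1 K) (w := fun _ => (K : ℝ)⁻¹) (p := y)
      (fun _ _ => by positivity) (by simp [hKpos.ne']) hy
    simpa [← smul_sum, ← mul_sum] using this
  have hsum : α * (∑ k ∈ Icc 1 K, φ (y k) - K * c) ≤ Φ 1 - Φ (K + 1) :=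
    calc α * (∑ k ∈ Icc 1 K, φ (y k) - K * c) = ∑ k ∈ Icc 1 K, α * (φ (y k) - c) := by
          rw [← mul_sum, sum_sub_distrib, sum_const, Nat.card_Icc, nsmul_eq_mul]
          simp
      _ ≤ ∑ k ∈ Icc 1 K, (Φ k - Φ (k + 1)) := sum_le_sum hstep
      _ = Φ 1 - Φ (K + 1) := by
          rw [← neg_sub, ← sum_Icc_sub (m := 1) hK Φ, ← sum_neg_distrib]
          simp
  rw [le_div_iff₀ (by positivity)]
  calc (φ ((K : ℝ)⁻¹ • ∑ k ∈ Icc 1 K, y k) - c) * (α * K)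
      ≤ ((K : ℝ)⁻¹ * ∑ k ∈ Icc 1 K, φ (y k) - c) * (α * K) := by gcongr
    _ = α * (∑ k ∈ Icc 1 K, φ (y k) - K * c) := by field_simp
    _ ≤ Φ 1 := by linarith

section Bregman

variable {V n : ℕ} {ψ : NodeVec V n → ℝ} {ψ' : NodeVec V n → NodeVec V n}
  {S : Set (NodeVec V n)} {x x' z : NodeVec V n}

theorem bregman_three_point :
    ⟪ψ' x' - ψ' x, z - x'⟫ = bregman ψ ψ' z x - bregman ψ ψ' z x' - bregman ψ ψ' x' x := by
  simp only [bregman, inner_sub_left, inner_sub_right]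
  ring

theorem hasGradientAt_bregman_left (hψ : HasGradientAt ψ (ψ' x') x') (x : NodeVec V n) :
    HasGradientAt (fun y => bregman ψ ψ' y x) (ψ' x' - ψ' x) x' := by
  have h := (hψ.sub (hasGradientAt_const x' (ψ x))).sub
    ((hasGradientAt_inner_left (ψ' x) x').sub (hasGradientAt_const x' ⟪ψ' x, x⟫))
  simpa only [bregman, inner_sub_right, sub_zero] using h

theorem half_norm_sub_sq_le_bregman (hψS : ConvexOn ℝ S (fun y => ψ y - 1 / 2 * ‖y‖ ^ 2))
    (hx : x ∈ S) (hz : z ∈ S) (hψ : HasGradientAt ψ (ψ' x) x) :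
    ‖z - x‖ ^ 2 / 2 ≤ bregman ψ ψ' z x := by
  have := add_inner_gradient_add_mul_norm_sq_le hψS hx hz hψ
  rw [bregman]
  linarith

theorem mirror_step_inner_le {α : ℝ} {w : NodeVec V n} (hS : Convex ℝ S)
    (hmin : IsMinOn (fun y => α * ⟪w, y⟫ + bregman ψ ψ' y x) S x') (hx' : x' ∈ S) (hz : z ∈ S)
    (hψ : HasGradientAt ψ (ψ' x') x') :
    α * ⟪w, x' - z⟫ ≤ bregman ψ ψ' z x - bregman ψ ψ' z x' - bregman ψ ψ' x' x := by
  have h := hmin.inner_gradient_nonneg hS hx' hz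
    (((hasGradientAt_inner_left w x').const_mul α).add (hasGradientAt_bregman_left hψ x))
  rw [inner_add_left, real_inner_smul_left, bregman_three_point] at h
  rw [← neg_sub z x', inner_neg_right]
  linarith

end Bregman

section Graph

variable {V m n : ℕ} (head tail : Fin m → Fin V)

/-- `(Eᵀ x)_e` in the paper's notation. -/
def edgeDiff (e : Fin m) (x : NodeVec V n) : EuclideanSpace ℝ (Fin n) :=
  ∑ i, inc head tail i e • x i

theorem EltMap_apply (l : Fin m → ℝ) (x : NodeVec V n) (e : Fin m) :
    EltMap head tail l x e = √(l e) • edgeDiff head tail e x :=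
  rfl

theorem inner_Elmap (l : Fin m → ℝ) (u : EdgeVec m n) (x : NodeVec V n) :
    ⟪Elmap head tail l u, x⟫ = ⟪u, EltMap head tail l x⟫ := by
  rw [PiLp.inner_apply, PiLp.inner_apply]
  simp only [Elmap, EltMap_apply, edgeDiff, PiLp.toLp_apply, sum_inner,
    inner_sum, real_inner_smul_left, real_inner_smul_right, mul_sum]
  rw [sum_comm]
  congr! 2 with e _ i _
  ring

theorem inner_LrMap (r : Fin m → ℝ) (x y : NodeVec V n) :
    ⟪LrMap head tail r x, y⟫ = ∑ e, r e * ⟪edgeDiff head tail e x, edgeDiff head tail e y⟫ := by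
  rw [PiLp.inner_apply]
  simp only [LrMap, edgeDiff, PiLp.toLp_apply, sum_inner,
    inner_sum, real_inner_smul_left, real_inner_smul_right, mul_sum]
  rw [sum_comm]
  exact sum_congr rfl fun e _ => sum_congr rfl fun i _ => sum_congr rfl fun j _ => by ring

theorem norm_EltMap_sq {l : Fin m → ℝ} (hl : ∀ e, 0 ≤ l e) (x : NodeVec V n) :
    ‖EltMap head tail l x‖ ^ 2 = ∑ e, l e * ‖edgeDiff head tail e x‖ ^ 2 := by
  simp only [PiLp.norm_sq_eq_of_L2, EltMap_apply, norm_smul, mul_pow, Real.norm_eq_abs, sq_abs,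
    Real.sq_sqrt (hl _)]

def LrLin (r : Fin m → ℝ) : NodeVec V n →ₗ[ℝ] NodeVec V n where
  toFun := LrMap head tail r
  map_add' x y := by
    ext i : 1
    simp [LrMap, smul_add, sum_add_distrib]
  map_smul' c x := by
    ext i : 1
    simp [LrMap, smul_sum, smul_comm c]

theorem LrLin_apply (r : Fin m → ℝ) (x : NodeVec V n) : LrLin head tail r x = LrMap head tail r x :=
  rfl

theorem isPositive_LrLin {r : Fin m → ℝ} (hr : ∀ e, 0 ≤ r e) :
    (LrLin head tail (n := n) r).IsPositive := by
  refine (LinearMap.isPositive_iff _).mpr ⟨fun x y => ?_, fun x => ?_⟩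
  · rw [LrLin_apply, LrLin_apply, ← real_inner_comm x, inner_LrMap, inner_LrMap]
    exact sum_congr rfl fun e _ => by rw [real_inner_comm]
  · rw [LrLin_apply, inner_LrMap]
    exact sum_nonneg fun e _ => mul_nonneg (hr e) real_inner_self_nonneg

theorem inner_LrMap_self_le {r : Fin m → ℝ} (hr : ∀ e, 0 ≤ r e) {lam : ℝ}
    (hlam : lam ∈ upperBounds
      {μ : ℝ | ∃ x : NodeVec V n, x ≠ 0 ∧ LrMap head tail r x = μ • x})
    (v : NodeVec V n) : ⟪LrMap head tail r v, v⟫ ≤ lam * ‖v‖ ^ 2 := by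
  refine (isPositive_LrLin head tail hr).isSymmetric.inner_le_mul_norm_sq (fun μ hμ => hlam ?_) v
  obtain ⟨x, hx⟩ := hμ.exists_hasEigenvector
  exact ⟨x, hx.2, hx.apply_eq_smul⟩

theorem mul_norm_EltMap_sq_le_inner_LrMap {l r : Fin m → ℝ} {α : ℝ} (hl : ∀ e, 0 ≤ l e)
    (hlr : ∀ e, α * l e ≤ r e) (x : NodeVec V n) :
    α * ‖EltMap head tail l x‖ ^ 2 ≤ ⟪LrMap head tail r x, x⟫ := by
  rw [norm_EltMap_sq head tail hl, inner_LrMap, mul_sum]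
  refine sum_le_sum fun e _ => ?_
  rw [real_inner_self_eq_norm_sq, ← mul_assoc]
  exact mul_le_mul_of_nonneg_right (hlr e) (sq_nonneg _)

theorem inner_LrMap_eq_zero_of_EltMap_eq_zero {l : Fin m → ℝ} (hl : ∀ e, 0 < l e)
    {x : NodeVec V n} (hx : EltMap head tail l x = 0) (r : Fin m → ℝ) (y : NodeVec V n) :
    ⟪LrMap head tail r y, x⟫ = 0 := by
  have hdiff (e : Fin m) : edgeDiff head tail e x = 0 := by
    have := congrArg (· e) hx
    simpa [EltMap_apply, (Real.sqrt_pos.mpr (hl e)).ne'] using this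
  simp [inner_LrMap, hdiff]

end Graph

noncomputable section RLC

variable {V m n : ℕ}

def lagrangian (f : NodeVec V n → ℝ) (head tail : Fin m → Fin V) (l : Fin m → ℝ)
    (x : NodeVec V n) (u : EdgeVec m n) : ℝ :=
  f x + ⟪Elmap head tail l u, x⟫

def lyapunov (ψ : NodeVec V n → ℝ) (ψ' : NodeVec V n → NodeVec V n) (xstar : NodeVec V n)
    (ustar : EdgeVec m n) (x : NodeVec V n) (u : EdgeVec m n) : ℝ :=
  bregman ψ ψ' xstar x + ‖u - ustar‖ ^ 2 / 2

variable {head tail : Fin m → Fin V} {ψ : NodeVec V n → ℝ} {ψ' : NodeVec V n → NodeVec V n}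
  {S : Set (NodeVec V n)} {f : NodeVec V n → ℝ} {x x' z : NodeVec V n}

theorem lyapunov_nonneg {xstar : NodeVec V n} {u ustar : EdgeVec m n}
    (hψS : ConvexOn ℝ S (fun y => ψ y - 1 / 2 * ‖y‖ ^ 2)) (hx : x ∈ S) (hxstar : xstar ∈ S)
    (hψ : HasGradientAt ψ (ψ' x) x) : 0 ≤ lyapunov ψ ψ' xstar ustar x u :=
  add_nonneg ((div_nonneg (sq_nonneg _) zero_le_two).trans
    (half_norm_sub_sq_le_bregman hψS hx hxstar hψ)) (by positivity)

theorem mirror_descent_step_gap_le {α β : ℝ} (hα : 0 ≤ α) {g p : NodeVec V n} (hS : Convex ℝ S)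
    (hψ : HasGradientAt ψ (ψ' x') x') (hf : ConvexOn ℝ S f)
    (hfβ : ConvexOn ℝ S (fun y => β / 2 * ‖y‖ ^ 2 - f y)) (hg : HasGradientAt f g x)
    (hx : x ∈ S) (hx' : x' ∈ S) (hz : z ∈ S)
    (hmin : IsMinOn (fun y => α * ⟪p + g, y⟫ + bregman ψ ψ' y x) S x') :
    α * (f x' - f z + ⟪p, x' - z⟫)
      ≤ bregman ψ ψ' z x - bregman ψ ψ' z x' - bregman ψ ψ' x' x + α * β / 2 * ‖x' - x‖ ^ 2 := by
  have hmirror := mirror_step_inner_le hS hmin hx' hz hψ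
  have hconv := hf.add_inner_gradient_le hx hz hg
  have hsmooth := le_add_inner_gradient_add_mul_norm_sq hfβ hx hx' hg
  have hgap : f x' - f z ≤ ⟪g, x' - z⟫ + β / 2 * ‖x' - x‖ ^ 2 := by
    simp only [inner_sub_right] at hconv hsmooth ⊢
    linarith
  rw [inner_add_left] at hmirror
  nlinarith [mul_le_mul_of_nonneg_left hgap hα]

theorem rlc_step_gap_le_lyapunov_sub {l r : Fin m → ℝ} {α β lam : ℝ} {g xstar : NodeVec V n}
    {u u' ustar : EdgeVec m n} (hα : 0 ≤ α) (hl : ∀ e, 0 < l e) (hr : ∀ e, 0 ≤ r e)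
    (hαlr : ∀ e, α * l e ≤ r e) (hαβ : α * (β + lam) ≤ 1)
    (hlam : ∀ v : NodeVec V n, ⟪LrMap head tail r v, v⟫ ≤ lam * ‖v‖ ^ 2) (hS : Convex ℝ S)
    (hψ : ∀ y ∈ S, HasGradientAt ψ (ψ' y) y)
    (hψS : ConvexOn ℝ S (fun y => ψ y - 1 / 2 * ‖y‖ ^ 2)) (hf : ConvexOn ℝ S f)
    (hfβ : ConvexOn ℝ S (fun y => β / 2 * ‖y‖ ^ 2 - f y)) (hg : HasGradientAt f g x)
    (hx : x ∈ S) (hx' : x' ∈ S) (hxstar : xstar ∈ S) (hprimal : EltMap head tail l xstar = 0)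
    (hmin : IsMinOn (fun y => α * ⟪LrMap head tail r x + Elmap head tail l u + g, y⟫
      + bregman ψ ψ' y x) S x')
    (hu' : u' = u + α • EltMap head tail l x') :
    α * (lagrangian f head tail l x' ustar - lagrangian f head tail l xstar ustar)
      ≤ lyapunov ψ ψ' xstar ustar x u - lyapunov ψ ψ' xstar ustar x' u' := by
  have hdescent := mirror_descent_step_gap_le hα hS (hψ x' hx') hf hfβ hg hx hx' hxstar hmin
  have hlinear : ⟪LrMap head tail r x + Elmap head tail l u, x' - xstar⟫
      = ⟪LrMap head tail r x, x'⟫ + ⟪u, EltMap head tail l x'⟫ := by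
    rw [inner_add_left, inner_sub_right, inner_sub_right, inner_Elmap, inner_Elmap, hprimal,
      inner_LrMap_eq_zero_of_EltMap_eq_zero head tail hl hprimal, inner_zero_right]
    ring
  have hdual : ‖u' - ustar‖ ^ 2 / 2 = ‖u - ustar‖ ^ 2 / 2
      + α * ⟪u - ustar, EltMap head tail l x'⟫ + α ^ 2 / 2 * ‖EltMap head tail l x'‖ ^ 2 := by
    rw [hu', add_sub_right_comm, norm_add_sq_real, real_inner_smul_right, norm_smul,
      Real.norm_eq_abs, mul_pow, sq_abs]
    ring
  have hEltBound := mul_le_mul_of_nonneg_left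
    (mul_norm_EltMap_sq_le_inner_LrMap head tail (fun e => (hl e).le) hαlr x') hα
  have hcross := mul_le_mul_of_nonneg_left
    (((isPositive_LrLin head tail hr).inner_sub_two_inner_le x x').trans (hlam _)) hα
  simp only [LrLin_apply] at hcross
  have hbreg := half_norm_sub_sq_le_bregman hψS hx hx' (hψ x hx)
  have hstepsize := mul_le_of_le_one_left (sq_nonneg ‖x' - x‖) hαβ
  simp only [lagrangian, lyapunov, inner_Elmap, hprimal, inner_zero_right]
  rw [hlinear] at hdescent
  rw [hdual, inner_sub_left]
  nlinarith

end RLC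

theorem rlc_averaged_convergence_general (V m n : ℕ) (K : ℕ) (hK : 0 < K)
    (head tail : Fin m → Fin V)
    (l r : Fin m → ℝ) (hl : ∀ e, 0 < l e) (hr : ∀ e, 0 < r e)
    (γ : ℝ)
    (hγ : IsGreatest {a : ℝ | ∀ e, a * l e ≤ r e} (1 / γ))
    (lam : ℝ)
    (hlam : IsGreatest
      {μ : ℝ | ∃ x : NodeVec V n, x ≠ 0 ∧ LrMap head tail r x = μ • x} lam)
    -- the constraint set
    (X₀ : Set (EuclideanSpace ℝ (Fin n)))
    -- the mirror map, a sum of 1-strongly convex node potentials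
    (ψ₀ : EuclideanSpace ℝ (Fin n) → ℝ)
    (hψ₀ : ConvexOn ℝ X₀ (fun v => ψ₀ v - ‖v‖ ^ 2 / 2))
    (ψ' : NodeVec V n → NodeVec V n)
    (hψ' : ∀ z ∈ {x : NodeVec V n | ∀ i, x i ∈ X₀},
      HasGradientAt (fun x : NodeVec V n => ∑ i, ψ₀ (x i)) (ψ' z) z)
    -- the objective, a sum of convex β-smooth node costs
    (β : ℝ)
    (F : Fin V → EuclideanSpace ℝ (Fin n) → ℝ)
    (hFconv : ∀ i, ConvexOn ℝ X₀ (F i))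
    (hFsmooth : ∀ i, ConvexOn ℝ X₀ (fun v => β / 2 * ‖v‖ ^ 2 - F i v))
    (g : NodeVec V n → NodeVec V n)
    (hg : ∀ z ∈ {x : NodeVec V n | ∀ i, x i ∈ X₀},
      HasGradientAt (fun x : NodeVec V n => ∑ i, F i (x i)) (g z) z)
    -- the saddle point (x*, u*)
    (xstar : NodeVec V n) (ustar : EdgeVec m n)
    (hxstarX : ∀ i, xstar i ∈ X₀)
    (hprimal : EltMap head tail l xstar = 0)
    -- the constant step size
    (α : ℝ) (hα : 0 < α) (hαle : α ≤ min (1 / (β + lam)) (1 / γ))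
    -- the RLC iterates (indexed from k = 1) with noiseless gradients
    (x : ℕ → NodeVec V n) (u : ℕ → EdgeVec m n)
    (hxX : ∀ k, 1 ≤ k → ∀ i, x k i ∈ X₀)
    (hxmin : ∀ k, 1 ≤ k → ∀ z : NodeVec V n, (∀ i, z i ∈ X₀) →
      α * ⟪LrMap head tail r (x k) + Elmap head tail l (u k) + g (x k),
            x (k + 1)⟫
          + bregman (fun y => ∑ i, ψ₀ (y i)) ψ' (x (k + 1)) (x k)
        ≤ α * ⟪LrMap head tail r (x k) + Elmap head tail l (u k) + g (x k), z⟫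
          + bregman (fun y => ∑ i, ψ₀ (y i)) ψ' z (x k))
    (hu : ∀ k, 1 ≤ k → u (k + 1) = u k + α • EltMap head tail l (x (k + 1))) :
    ((∑ i, F i (((K : ℝ)⁻¹ • ∑ k ∈ Finset.Icc 1 K, x (k + 1)) i))
        + ⟪Elmap head tail l ustar, (K : ℝ)⁻¹ • ∑ k ∈ Finset.Icc 1 K, x (k + 1)⟫)
      - ((∑ i, F i (xstar i)) + ⟪Elmap head tail l ustar, xstar⟫)
      ≤ (bregman (fun y => ∑ i, ψ₀ (y i)) ψ' xstar (x 1)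
          + ‖u 1 - ustar‖ ^ 2 / 2) / (α * K) := by
  set S := {x : NodeVec V n | ∀ i, x i ∈ X₀}
  set f : NodeVec V n → ℝ := fun y => ∑ i, F i (y i)
  set ψ : NodeVec V n → ℝ := fun y => ∑ i, ψ₀ (y i)
  have hf : ConvexOn ℝ S f := convexOn_sum_apply hFconv
  have hψS : ConvexOn ℝ S (fun y => ψ y - 1 / 2 * ‖y‖ ^ 2) :=
    convexOn_sum_apply_sub_mul_norm_sq fun _ => hψ₀.congr fun v _ => by ring
  have hαlr (e : Fin m) : α * l e ≤ r e :=
    (mul_le_mul_of_nonneg_right (hαle.trans (min_le_right _ _)) (hl e).le).trans (hγ.1 e)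
  have hαβ : α * (β + lam) ≤ 1 := by
    have hα' := hαle.trans (min_le_left _ _)
    exact (le_div_iff₀ (one_div_pos.mp (hα.trans_le hα'))).mp hα'
  have hstep : ∀ k ∈ Icc 1 K, α * (lagrangian f head tail l (x (k + 1)) ustar
      - lagrangian f head tail l xstar ustar) ≤ lyapunov ψ ψ' xstar ustar (x k) (u k)
        - lyapunov ψ ψ' xstar ustar (x (k + 1)) (u (k + 1)) := by
    intro k hk
    have hk1 := (mem_Icc.mp hk).1
    exact rlc_step_gap_le_lyapunov_sub hα.le hl (fun e => (hr e).le) hαlr hαβ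
      (inner_LrMap_self_le head tail (fun e => (hr e).le) hlam.2) hf.1 hψ' hψS hf
      (convexOn_mul_norm_sq_sub_sum_apply hFsmooth) (hg _ (hxX k hk1)) (hxX k hk1)
      (hxX (k + 1) (Nat.le_add_left 1 k)) hxstarX hprimal (fun z hz => hxmin k hk1 z hz) (hu k hk1)
  exact (hf.add ((innerSL ℝ (Elmap head tail l ustar)).toLinearMap.convexOn hf.1)
    ).map_average_sub_le_of_telescoping hK (fun k _ => hxX (k + 1) (Nat.le_add_left 1 k)) hα
    (lyapunov_nonneg hψS (hxX (K + 1) (Nat.le_add_left 1 K)) hxstarX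
      (hψ' _ (hxX (K + 1) (Nat.le_add_left 1 K))))
    hstep

/-- Theorem 1 of the paper: with noiseless gradients and constant step size
`0 < α ≤ min{1/(β+λ), 1/γ}`, the averaged RLC iterate satisfies the `O(1/K)`
duality-gap bound `ℓ(x̄^K, u*) − ℓ(x*, u*) ≤ V(x¹, u¹)/(αK)`. -/
theorem rlc_averaged_convergence (V m n : ℕ) (K : ℕ) (hK : 0 < K)
    (G : SimpleGraph (Fin V)) (hG : G.Connected)
    (head tail : Fin m → Fin V)
    (hadj : ∀ e, G.Adj (head e) (tail e))
    (hcover : ∀ i j, G.Adj i j →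
      ∃ e, (head e = i ∧ tail e = j) ∨ (head e = j ∧ tail e = i))
    (l r : Fin m → ℝ) (hl : ∀ e, 0 < l e) (hr : ∀ e, 0 < r e)
    (γ : ℝ) (hγpos : 0 < γ)
    (hγ : IsGreatest {a : ℝ | ∀ e, a * l e ≤ r e} (1 / γ))
    (lam : ℝ)
    (hlam : IsGreatest
      {μ : ℝ | ∃ x : NodeVec V n, x ≠ 0 ∧ LrMap head tail r x = μ • x} lam)
    -- the constraint set
    (X₀ : Set (EuclideanSpace ℝ (Fin n))) (hX₀c : Convex ℝ X₀)
    (hX₀cl : IsClosed X₀)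
    -- the mirror map, a sum of 1-strongly convex node potentials
    (ψ₀ : EuclideanSpace ℝ (Fin n) → ℝ)
    (hψ₀ : ConvexOn ℝ X₀ (fun v => ψ₀ v - ‖v‖ ^ 2 / 2))
    (ψ' : NodeVec V n → NodeVec V n)
    (hψ' : ∀ z ∈ {x : NodeVec V n | ∀ i, x i ∈ X₀},
      HasGradientAt (fun x : NodeVec V n => ∑ i, ψ₀ (x i)) (ψ' z) z)
    -- the objective, a sum of convex β-smooth node costs
    (β : ℝ) (hβ : 0 < β)
    (F : Fin V → EuclideanSpace ℝ (Fin n) → ℝ)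
    (hFconv : ∀ i, ConvexOn ℝ X₀ (F i))
    (hFsmooth : ∀ i, ConvexOn ℝ X₀ (fun v => β / 2 * ‖v‖ ^ 2 - F i v))
    (g : NodeVec V n → NodeVec V n)
    (hg : ∀ z ∈ {x : NodeVec V n | ∀ i, x i ∈ X₀},
      HasGradientAt (fun x : NodeVec V n => ∑ i, F i (x i)) (g z) z)
    -- the saddle point (x*, u*)
    (xstar : NodeVec V n) (ustar : EdgeVec m n)
    (hxstarX : ∀ i, xstar i ∈ X₀)
    (hprimal : EltMap head tail l xstar = 0)
    (hdual : ∀ z : NodeVec V n, (∀ i, z i ∈ X₀) →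
      ⟪-(Elmap head tail l ustar) - g xstar, z - xstar⟫ ≤ 0)
    -- the constant step size
    (α : ℝ) (hα : 0 < α) (hαle : α ≤ min (1 / (β + lam)) (1 / γ))
    -- the RLC iterates (indexed from k = 1) with noiseless gradients
    (x : ℕ → NodeVec V n) (u : ℕ → EdgeVec m n)
    (hxX : ∀ k, 1 ≤ k → ∀ i, x k i ∈ X₀)
    (hxmin : ∀ k, 1 ≤ k → ∀ z : NodeVec V n, (∀ i, z i ∈ X₀) →
      α * ⟪LrMap head tail r (x k) + Elmap head tail l (u k) + g (x k),
            x (k + 1)⟫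
          + bregman (fun y => ∑ i, ψ₀ (y i)) ψ' (x (k + 1)) (x k)
        ≤ α * ⟪LrMap head tail r (x k) + Elmap head tail l (u k) + g (x k), z⟫
          + bregman (fun y => ∑ i, ψ₀ (y i)) ψ' z (x k))
    (hu : ∀ k, 1 ≤ k → u (k + 1) = u k + α • EltMap head tail l (x (k + 1))) :
    ((∑ i, F i (((K : ℝ)⁻¹ • ∑ k ∈ Finset.Icc 1 K, x (k + 1)) i))
        + ⟪Elmap head tail l ustar, (K : ℝ)⁻¹ • ∑ k ∈ Finset.Icc 1 K, x (k + 1)⟫)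
      - ((∑ i, F i (xstar i)) + ⟪Elmap head tail l ustar, xstar⟫)
      ≤ (bregman (fun y => ∑ i, ψ₀ (y i)) ψ' xstar (x 1)
          + ‖u 1 - ustar‖ ^ 2 / 2) / (α * K) :=
  rlc_averaged_convergence_general V m n K hK head tail l r hl hr γ hγ lam hlam X₀ ψ₀ hψ₀ ψ' hψ' β F
    hFconv hFsmooth g hg xstar ustar hxstarX hprimal α hα hαle x u hxX hxmin hu
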